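/- Let H be a finite group acting on a finite set Z, let σ : H ≃* H be an automorphism, and let F : Z → Z be a map satisfying F(h • z) = σ(h) • F(z) for all h ∈ H and z ∈ Z. Consider the set P := {(z, h) ∈ Z × H : h • F(z) = z} equipped with the H-action g • (z, h) := (g • z, g * h * σ(g)⁻¹) (which indeed preserves P). For h ∈ H, the stabilizer H^{hσ} := {g ∈ H : g * h * σ(g)⁻¹ = h} acts on the set Z^{h∘F} := {z ∈ Z : h • F(z) = z}. Then there is a bijection between the set of H-orbits on P and the disjoint union, over a set of representatives h of the σ-conjugacy classes of H (orbits of g • h = g * h * σ(g)⁻¹), of the sets of H^{hσ}-orbits on Z^{h∘F}. -/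

import Mathlib

/-- The σ-twisted conjugation equivalence relation on a group `H`:
`h ~ h'` iff `h' = g * h * (σ g)⁻¹` for some `g`. Its classes are the
σ-conjugacy classes, i.e. the set `H¹(F,H)`. -/
def twistedConjSetoid {H : Type*} [Group H] (σ : H ≃* H) : Setoid H where
  r h h' := ∃ g : H, g * h * (σ g)⁻¹ = h'
  iseqv := by
    constructor
    · intro h; exact ⟨1, by simp⟩
    · rintro h h' ⟨g, rfl⟩
      refine ⟨g⁻¹, ?_⟩
      simp only [map_inv]
      group
    · rintro h h' h'' ⟨g, rfl⟩ ⟨g', rfl⟩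
      refine ⟨g' * g, ?_⟩
      simp only [map_mul]
      group

/-- The orbit equivalence relation for the twisted `H`-action
`g • (z, h) = (g • z, g * h * (σ g)⁻¹)` on the set
`P = {(z, h) | h • F z = z}` of "fixed points of the Frobenius on `[Z/H]`". -/
def pairSetoid {H Z : Type*} [Group H] [MulAction H Z] (σ : H ≃* H) (F : Z → Z) :
    Setoid {p : Z × H // p.2 • F p.1 = p.1} where
  r p q := ∃ g : H, g • p.1.1 = q.1.1 ∧ g * p.1.2 * (σ g)⁻¹ = q.1.2
  iseqv := by
    constructor
    · intro p; exact ⟨1, by simp, by simp⟩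
    · rintro p q ⟨g, h1, h2⟩
      refine ⟨g⁻¹, by rw [← h1, inv_smul_smul], ?_⟩
      rw [← h2]
      simp only [map_inv, inv_inv]
      group
    · rintro p q r ⟨g, h1, h2⟩ ⟨g', h1', h2'⟩
      refine ⟨g' * g, by rw [mul_smul, h1, h1'], ?_⟩
      rw [← h2', ← h2]
      simp only [map_mul, mul_inv_rev]
      group

/-- The orbit equivalence relation for the action of the twisted stabilizer
`H^{hσ} = {g | g * h * (σ g)⁻¹ = h}` on the fixed-point set
`Z^{h∘F} = {z | h • F z = z}`. -/
def fixedSetoid {H Z : Type*} [Group H] [MulAction H Z] (σ : H ≃* H) (F : Z → Z)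
    (h : H) : Setoid {z : Z // h • F z = z} where
  r z z' := ∃ g : H, g * h * (σ g)⁻¹ = h ∧ g • (z : Z) = (z' : Z)
  iseqv := by
    constructor
    · intro z; exact ⟨1, by simp, one_smul _ _⟩
    · rintro z z' ⟨g, hg, hz⟩
      have h2 : g * h = h * σ g := mul_inv_eq_iff_eq_mul.mp hg
      refine ⟨g⁻¹, ?_, by rw [← hz, inv_smul_smul]⟩
      simp only [map_inv, inv_inv]
      rw [mul_assoc, ← h2]
      group
    · rintro z z' z'' ⟨g, hg, hz⟩ ⟨g', hg', hz'⟩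
      refine ⟨g' * g, ?_, by rw [mul_smul, hz, hz']⟩
      calc (g' * g) * h * (σ (g' * g))⁻¹
          = g' * (g * h * (σ g)⁻¹) * (σ g')⁻¹ := by
            simp only [map_mul, mul_inv_rev]; group
        _ = h := by rw [hg]; exact hg'

/-!
An orbit of `(z, h)` under the twisted action determines the σ-conjugacy class of `h`, and
acting by `g⁻¹`, where `g * h₀ * (σ g)⁻¹ = h`, moves it to an orbit whose second coordinate is
the chosen representative `h₀`. Pairs with fixed second coordinate `h₀` are `Z^{h₀∘F}`, and two of
them are in the same orbit exactly when they are related by the twisted stabilizer `H^{h₀σ}`.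
-/

section

variable {H Z : Type*} [Group H] [MulAction H Z] (σ : H ≃* H) {F : Z → Z}

theorem twistedConj_smul_map_smul (hF : ∀ (h : H) (z : Z), F (h • z) = σ h • F z)
    {h : H} {z : Z} (hz : h • F z = z) (g : H) :
    (g * h * (σ g)⁻¹) • F (g • z) = g • z := by
  rw [hF, mul_smul, mul_smul, inv_smul_smul, hz]

/-- The invariant of `[Z/H]^F` splitting it into pieces: the class of `h` in `H¹(F, H)`. -/
def pairTwistedClass (F : Z → Z) :
    Quotient (pairSetoid σ F) → Quotient (twistedConjSetoid σ) :=
  Quotient.lift (fun p => Quotient.mk _ p.1.2) fun _ _ ⟨g, _, hg⟩ => Quotient.sound ⟨g, hg⟩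

def fixedToPair (h : H) : Quotient (fixedSetoid σ F h) → Quotient (pairSetoid σ F) :=
  Quotient.lift (fun z => Quotient.mk _ ⟨(z.1, h), z.2⟩)
    fun _ _ ⟨g, hg, hz⟩ => Quotient.sound ⟨g, hz, hg⟩

theorem pairTwistedClass_fixedToPair (h : H) (x : Quotient (fixedSetoid σ F h)) :
    pairTwistedClass σ F (fixedToPair σ h x) = Quotient.mk _ h := by
  induction x using Quotient.ind
  rfl

theorem fixedToPair_injective (h : H) : Function.Injective (fixedToPair (F := F) σ h) := by
  rintro ⟨z⟩ ⟨z'⟩ hzz'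
  obtain ⟨g, hz, hg⟩ := Quotient.exact hzz'
  exact Quot.sound ⟨g, hg, hz⟩

theorem mk_mem_range_fixedToPair (hF : ∀ (h : H) (z : Z), F (h • z) = σ h • F z) {h : H}
    (p : {p : Z × H // p.2 • F p.1 = p.1})
    (hp : Quotient.mk (twistedConjSetoid σ) h = Quotient.mk _ p.1.2) :
    Quotient.mk _ p ∈ Set.range (fixedToPair σ h) := by
  obtain ⟨⟨z, h'⟩, hz⟩ := p
  obtain ⟨g, rfl⟩ := Quotient.exact hp
  have hgz : h • F (g⁻¹ • z) = g⁻¹ • z := by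
    simpa [mul_assoc] using twistedConj_smul_map_smul σ hF hz g⁻¹
  exact ⟨Quotient.mk _ ⟨g⁻¹ • z, hgz⟩, Quotient.sound ⟨g, smul_inv_smul g z, rfl⟩⟩

theorem bijective_sigma_fixedToPair (hF : ∀ (h : H) (z : Z), F (h • z) = σ h • F z)
    (rep : Quotient (twistedConjSetoid σ) → H)
    (hrep : ∀ C, Quotient.mk (twistedConjSetoid σ) (rep C) = C) :
    Function.Bijective fun x : Σ C, Quotient (fixedSetoid σ F (rep C)) =>
      fixedToPair σ (rep x.1) x.2 := by
  refine ⟨?_, ?_⟩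
  · rintro ⟨C, x⟩ ⟨C', x'⟩ hxx'
    have hCC' : C = C' := by
      simpa only [pairTwistedClass_fixedToPair, hrep] using congrArg (pairTwistedClass σ F) hxx'
    subst hCC'
    exact congrArg (Sigma.mk C) (fixedToPair_injective σ _ hxx')
  · rintro ⟨p⟩
    obtain ⟨x, hx⟩ := mk_mem_range_fixedToPair σ hF p (hrep _)
    exact ⟨⟨_, x⟩, hx⟩

end

theorem fixed_point_groupoid_decomposition_general
    {H Z : Type*} [Group H] [MulAction H Z]
    (σ : H ≃* H) (F : Z → Z)
    (hF : ∀ (h : H) (z : Z), F (h • z) = σ h • F z)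
    (rep : Quotient (twistedConjSetoid σ) → H)
    (hrep : ∀ C, Quotient.mk (twistedConjSetoid σ) (rep C) = C) :
    (∀ (g h : H) (z : Z), h • F z = z →
        (g * h * (σ g)⁻¹) • F (g • z) = g • z) ∧
    (∀ (g h : H), g * h * (σ g)⁻¹ = h → ∀ z : Z, h • F z = z →
        h • F (g • z) = g • z) ∧
    Nonempty (Quotient (pairSetoid σ F) ≃
        Σ C : Quotient (twistedConjSetoid σ), Quotient (fixedSetoid σ F (rep C))) := by
  refine ⟨fun g h z hz => twistedConj_smul_map_smul σ hF hz g, fun g h hg z hz => ?_,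
    ⟨(Equiv.ofBijective _ (bijective_sigma_fixedToPair σ hF rep hrep)).symm⟩⟩
  simpa only [hg] using twistedConj_smul_map_smul σ hF hz g

/-- For a finite group `H` acting on a finite set `Z`, an
automorphism `σ` of `H` and a map `F : Z → Z` with `F (h • z) = σ h • F z`,
the twisted action `g • (z, h) = (g • z, g * h * (σ g)⁻¹)` preserves
`P = {(z, h) | h • F z = z}`, the twisted stabilizer `H^{hσ}` acts on
`Z^{h∘F}`, and there is a bijection between the set of `H`-orbits on `P` and
the disjoint union, over representatives `h` of the σ-conjugacy classes of
`H`, of the sets of `H^{hσ}`-orbits on `Z^{h∘F}`. -/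
theorem fixed_point_groupoid_decomposition
    {H Z : Type*} [Group H] [Finite H] [Finite Z] [MulAction H Z]
    (σ : H ≃* H) (F : Z → Z)
    (hF : ∀ (h : H) (z : Z), F (h • z) = σ h • F z)
    (rep : Quotient (twistedConjSetoid σ) → H)
    (hrep : ∀ C, Quotient.mk (twistedConjSetoid σ) (rep C) = C) :
    (∀ (g h : H) (z : Z), h • F z = z →
        (g * h * (σ g)⁻¹) • F (g • z) = g • z) ∧
    (∀ (g h : H), g * h * (σ g)⁻¹ = h → ∀ z : Z, h • F z = z →
        h • F (g • z) = g • z) ∧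
    Nonempty (Quotient (pairSetoid σ F) ≃
        Σ C : Quotient (twistedConjSetoid σ), Quotient (fixedSetoid σ F (rep C))) :=
  fixed_point_groupoid_decomposition_general σ F hF rep hrep
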